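/- arXiv:0709.3360 — 3 statements merged into one kernel-verified Lean document; each statement's English description precedes it below -/
import Mathlib

section
/- For every Schwartz function φ and every x ∈ ℝ, the nonlocal operator I[φ](x) := ∫₀^∞ ζ^(-1/3) φ''(x−ζ) dζ satisfies I[φ](x) = (4/9) ∫_{-∞}^0 (φ(x+z) − φ(x) − φ'(x)·z)/|z|^(7/3) dz. -/
/-!
Integrating by parts twice on `(0, ∞)` moves both derivatives onto the weight `ζ ^ p`:
`∫ ζ^p f''(x-ζ) = -p ∫ ζ^(p-1) (f'(x) - f'(x-ζ)) = p (p-1) ∫ ζ^(p-2) (f(x-ζ) - f(x) + f'(x) ζ)`.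
The first-order remainder is `O(ζ)` at `0` and bounded at `∞`, the second-order one is `O(ζ²)`
at `0` and `O(ζ)` at `∞`, so for `-1 < p < 0` all boundary terms vanish and all integrals converge.
For `p = -1/3` the constant is `4/9`, and `z = -ζ` gives the integral over `(-∞, 0)`.
-/

open MeasureTheory Set Filter Topology Real

lemma abs_rpow_mul_le_of_abs_le {h : ℝ → ℝ} {p C ζ : ℝ} {n : ℕ} (hζ : 0 < ζ)
    (hh : |h ζ| ≤ C * ζ ^ n) : |ζ ^ p * h ζ| ≤ C * ζ ^ (p + n) := by
  rw [abs_mul, abs_of_pos (rpow_pos_of_pos hζ p), rpow_add hζ, rpow_natCast]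
  calc ζ ^ p * |h ζ| ≤ ζ ^ p * (C * ζ ^ n) := by gcongr
    _ = C * (ζ ^ p * ζ ^ n) := by ring

lemma integrableOn_Ioi_zero_of_abs_le {h g : ℝ → ℝ} {C s : ℝ} (hs : -1 < s)
    (hh : ContinuousOn h (Ioi 0)) (h_zero : ∀ ζ ∈ Ioc 0 1, |h ζ| ≤ C * ζ ^ s)
    (hg : IntegrableOn g (Ioi 1)) (h_top : ∀ ζ ∈ Ioi 1, |h ζ| ≤ g ζ) :
    IntegrableOn h (Ioi 0) := by
  have hmeas : AEStronglyMeasurable h (volume.restrict (Ioi 0)) :=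
    hh.aestronglyMeasurable measurableSet_Ioi
  rw [← Ioc_union_Ioi_eq_Ioi zero_le_one]
  refine IntegrableOn.union ?_ ?_
  · have hpow : IntegrableOn (fun ζ : ℝ => C * ζ ^ s) (Ioc 0 1) :=
      ((intervalIntegrable_iff_integrableOn_Ioc_of_le zero_le_one).1
        (intervalIntegral.intervalIntegrable_rpow' hs)).const_mul C
    refine hpow.integrable.mono' (hmeas.mono_set Ioc_subset_Ioi_self) ?_
    exact (ae_restrict_iff' measurableSet_Ioc).2 (.of_forall h_zero)
  · refine hg.integrable.mono' (hmeas.mono_set (Ioi_subset_Ioi zero_le_one)) ?_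
    exact (ae_restrict_iff' measurableSet_Ioi).2 (.of_forall h_top)

lemma integrableOn_Ioi_rpow_mul {h : ℝ → ℝ} {p C₀ C₁ : ℝ} {a b : ℕ}
    (hh : ContinuousOn h (Ioi 0)) (ha : -1 < p + a) (hb : p + b < -1)
    (h_zero : ∀ ζ ∈ Ioc 0 1, |h ζ| ≤ C₀ * ζ ^ a) (h_top : ∀ ζ ∈ Ioi 1, |h ζ| ≤ C₁ * ζ ^ b) :
    IntegrableOn (fun ζ => ζ ^ p * h ζ) (Ioi 0) :=
  integrableOn_Ioi_zero_of_abs_le ha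
    (((continuousOn_id.rpow_const fun _ hζ => .inl (ne_of_gt hζ))).mul hh)
    (fun ζ hζ => abs_rpow_mul_le_of_abs_le hζ.1 (h_zero ζ hζ))
    ((integrableOn_Ioi_rpow_of_lt hb zero_lt_one).const_mul C₁)
    (fun ζ hζ => abs_rpow_mul_le_of_abs_le (zero_lt_one.trans hζ) (h_top ζ hζ))

lemma tendsto_rpow_mul_nhdsGT_zero {h : ℝ → ℝ} {p C : ℝ} {a : ℕ} (ha : 0 < p + a)
    (h_zero : ∀ ζ ∈ Ioc 0 1, |h ζ| ≤ C * ζ ^ a) :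
    Tendsto (fun ζ => ζ ^ p * h ζ) (𝓝[>] 0) (𝓝 0) := by
  have hpow : Tendsto (fun ζ : ℝ => C * ζ ^ (p + a)) (𝓝[>] 0) (𝓝 0) := by
    have := ((continuousAt_rpow_const 0 (p + a) (.inr ha.le)).tendsto.mono_left
      (nhdsWithin_le_nhds (s := Ioi 0))).const_mul C
    rwa [zero_rpow ha.ne', mul_zero] at this
  refine squeeze_zero_norm' ?_ hpow
  filter_upwards [Ioc_mem_nhdsGT zero_lt_one] with ζ hζ
  exact abs_rpow_mul_le_of_abs_le hζ.1 (h_zero ζ hζ)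

lemma tendsto_rpow_mul_atTop {h : ℝ → ℝ} {p C : ℝ} {b : ℕ} (hb : p + b < 0)
    (h_top : ∀ ζ ∈ Ioi 1, |h ζ| ≤ C * ζ ^ b) :
    Tendsto (fun ζ => ζ ^ p * h ζ) atTop (𝓝 0) := by
  have hpow : Tendsto (fun ζ : ℝ => C * ζ ^ (p + b)) atTop (𝓝 0) := by
    simpa using (tendsto_rpow_neg_atTop (neg_pos.2 hb)).const_mul C
  refine squeeze_zero_norm' ?_ hpow
  filter_upwards [Ioi_mem_atTop 1] with ζ hζ
  exact abs_rpow_mul_le_of_abs_le (zero_lt_one.trans hζ) (h_top ζ hζ)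

theorem integral_Ioi_rpow_mul_deriv {g g' : ℝ → ℝ} {p : ℝ}
    (hg : ∀ ζ ∈ Ioi 0, HasDerivAt g (g' ζ) ζ)
    (h_zero : Tendsto (fun ζ => ζ ^ p * g ζ) (𝓝[>] 0) (𝓝 0))
    (h_top : Tendsto (fun ζ => ζ ^ p * g ζ) atTop (𝓝 0))
    (hint : IntegrableOn (fun ζ => ζ ^ (p - 1) * g ζ) (Ioi 0))
    (hint' : IntegrableOn (fun ζ => ζ ^ p * g' ζ) (Ioi 0)) :
    ∫ ζ in Ioi 0, ζ ^ p * g' ζ = -p * ∫ ζ in Ioi 0, ζ ^ (p - 1) * g ζ := by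
  have := integral_Ioi_mul_deriv_eq_deriv_mul (u := fun ζ => ζ ^ p)
    (u' := fun ζ => p * ζ ^ (p - 1))
    (fun ζ hζ => hasDerivAt_rpow_const (.inl (ne_of_gt hζ))) hg hint'
    (by simpa only [IntegrableOn, Pi.mul_def, mul_assoc] using hint.const_mul p) h_zero h_top
  simp only [mul_assoc, integral_const_mul] at this
  rw [this]
  ring

lemma integral_Iio_div_abs_rpow (g : ℝ → ℝ) (s : ℝ) :
    ∫ z in Iio 0, g z / |z| ^ s = ∫ ζ in Ioi 0, ζ ^ (-s) * g (-ζ) := by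
  calc ∫ z in Iio 0, g z / |z| ^ s = ∫ z in Iic (-0), g z / |z| ^ s := by
        rw [neg_zero, integral_Iic_eq_integral_Iio]
    _ = ∫ ζ in Ioi 0, g (-ζ) / |-ζ| ^ s := (integral_comp_neg_Ioi 0 _).symm
    _ = ∫ ζ in Ioi 0, ζ ^ (-s) * g (-ζ) := by
        refine setIntegral_congr_fun measurableSet_Ioi fun ζ (hζ : 0 < ζ) => ?_
        rw [abs_neg, abs_of_pos hζ, rpow_neg hζ.le, div_eq_inv_mul]

section Taylor

variable {f f' f'' : ℝ → ℝ}

lemma abs_sub_comp_sub_le {B : ℝ} (hf : ∀ y, HasDerivAt f (f' y) y) (hB : ∀ y, |f' y| ≤ B)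
    (x ζ : ℝ) : |f x - f (x - ζ)| ≤ B * |ζ| := by
  simpa using Convex.norm_image_sub_le_of_norm_hasDerivWithin_le (f := f) (s := univ)
    (fun y _ => (hf y).hasDerivWithinAt) (fun y _ => hB y) convex_univ (mem_univ (x - ζ))
    (mem_univ x)

lemma hasDerivAt_sub_comp_sub (hf : ∀ y, HasDerivAt f (f' y) y) (x ζ : ℝ) :
    HasDerivAt (fun ζ => f x - f (x - ζ)) (f' (x - ζ)) ζ :=
  (((hf (x - ζ)).comp ζ ((hasDerivAt_id ζ).const_sub x)).const_sub (f x)).congr_deriv (by simp)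

lemma hasDerivAt_comp_sub_sub_add_mul (hf : ∀ y, HasDerivAt f (f' y) y) (x ζ : ℝ) :
    HasDerivAt (fun ζ => f (x - ζ) - f x + f' x * ζ) (f' x - f' (x - ζ)) ζ :=
  ((((hf (x - ζ)).comp ζ ((hasDerivAt_id ζ).const_sub x)).sub_const (f x)).add
    ((hasDerivAt_id ζ).const_mul (f' x))).congr_deriv (by simp; ring)

lemma abs_comp_sub_sub_add_mul_le {B : ℝ} (hf : ∀ y, HasDerivAt f (f' y) y)
    (hf' : ∀ y, HasDerivAt f' (f'' y) y) (hB : ∀ y, |f'' y| ≤ B) (x : ℝ) {ζ : ℝ} (hζ : 0 ≤ ζ) :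
    |f (x - ζ) - f x + f' x * ζ| ≤ B * ζ ^ 2 := by
  have hB₀ : 0 ≤ B := (abs_nonneg _).trans (hB 0)
  have := norm_image_sub_le_of_norm_deriv_le_segment' (C := B * ζ)
    (fun t _ => (hasDerivAt_comp_sub_sub_add_mul hf x t).hasDerivWithinAt)
    (fun t ht => (abs_sub_comp_sub_le hf' hB x t).trans (by
      rw [abs_of_nonneg ht.1]; exact mul_le_mul_of_nonneg_left ht.2.le hB₀))
    ζ ⟨hζ, le_rfl⟩
  simpa [sq, mul_assoc] using this

lemma abs_comp_sub_sub_add_mul_le_mul {B : ℝ} (hf : ∀ y, HasDerivAt f (f' y) y)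
    (hB : ∀ y, |f' y| ≤ B) (x : ℝ) {ζ : ℝ} (hζ : 0 ≤ ζ) :
    |f (x - ζ) - f x + f' x * ζ| ≤ (B + |f' x|) * ζ :=
  calc |f (x - ζ) - f x + f' x * ζ| = |-(f x - f (x - ζ)) + f' x * ζ| := by ring_nf
    _ ≤ |-(f x - f (x - ζ))| + |f' x * ζ| := abs_add_le _ _
    _ = |f x - f (x - ζ)| + |f' x| * ζ := by rw [abs_neg, abs_mul, abs_of_nonneg hζ]
    _ ≤ B * ζ + |f' x| * ζ := by
        gcongr
        simpa [abs_of_nonneg hζ] using abs_sub_comp_sub_le hf hB x ζ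
    _ = (B + |f' x|) * ζ := by ring

end Taylor

lemma integrableOn_Ioi_rpow_mul_comp_sub {g : ℝ → ℝ} {p B : ℝ} (hp₀ : -1 < p) (hp₁ : p ≤ 0)
    (hg_cont : Continuous g) (hg_int : Integrable g) (hB : ∀ y, |g y| ≤ B) (x : ℝ) :
    IntegrableOn (fun ζ => ζ ^ p * g (x - ζ)) (Ioi 0) := by
  refine integrableOn_Ioi_zero_of_abs_le hp₀
    ((continuousOn_id.rpow_const fun _ hζ => .inl (ne_of_gt hζ)).mul
      (hg_cont.comp (continuous_sub_left x)).continuousOn)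
    (fun ζ hζ => by
      simpa using abs_rpow_mul_le_of_abs_le (h := fun ζ => g (x - ζ)) (p := p) (n := 0) hζ.1
        (by simpa using hB (x - ζ)))
    (hg_int.comp_sub_left x).norm.integrableOn fun ζ hζ => ?_
  rw [abs_mul, abs_of_pos (rpow_pos_of_pos (zero_lt_one.trans hζ) p)]
  exact mul_le_of_le_one_left (abs_nonneg _) (rpow_le_one_of_one_le_of_nonpos hζ.le hp₁)

theorem integral_rpow_mul_comp_sub {f f' f'' : ℝ → ℝ} {p B₁ B₂ : ℝ} (hp₀ : -1 < p) (hp₁ : p < 0)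
    (hf : ∀ y, HasDerivAt f (f' y) y) (hf' : ∀ y, HasDerivAt f' (f'' y) y)
    (hf''_cont : Continuous f'') (hf''_int : Integrable f'')
    (hB₁ : ∀ y, |f' y| ≤ B₁) (hB₂ : ∀ y, |f'' y| ≤ B₂) (x : ℝ) :
    ∫ ζ in Ioi 0, ζ ^ p * f'' (x - ζ)
      = p * (p - 1) * ∫ ζ in Ioi 0, ζ ^ (p - 2) * (f (x - ζ) - f x + f' x * ζ) := by
  have hG_zero : ∀ ζ ∈ Ioc (0 : ℝ) 1, |f' x - f' (x - ζ)| ≤ B₂ * ζ ^ 1 := fun ζ hζ => by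
    simpa [abs_of_pos hζ.1] using abs_sub_comp_sub_le hf' hB₂ x ζ
  have hG_top : ∀ ζ ∈ Ioi (1 : ℝ), |f' x - f' (x - ζ)| ≤ 2 * B₁ * ζ ^ 0 := fun ζ _ => by
    simpa [two_mul] using (abs_sub (f' x) (f' (x - ζ))).trans (add_le_add (hB₁ x) (hB₁ (x - ζ)))
  have hF_zero : ∀ ζ ∈ Ioc (0 : ℝ) 1, |f (x - ζ) - f x + f' x * ζ| ≤ B₂ * ζ ^ 2 :=
    fun ζ hζ => abs_comp_sub_sub_add_mul_le hf hf' hB₂ x hζ.1.le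
  have hF_top : ∀ ζ ∈ Ioi (1 : ℝ), |f (x - ζ) - f x + f' x * ζ| ≤ (B₁ + |f' x|) * ζ ^ 1 :=
    fun ζ hζ => by simpa using abs_comp_sub_sub_add_mul_le_mul hf hB₁ x (zero_lt_one.trans hζ).le
  have hG_cont : Continuous fun ζ => f' x - f' (x - ζ) :=
    continuous_iff_continuousAt.2 fun ζ => (hasDerivAt_sub_comp_sub hf' x ζ).continuousAt
  have hF_cont : Continuous fun ζ => f (x - ζ) - f x + f' x * ζ :=
    continuous_iff_continuousAt.2 fun ζ => (hasDerivAt_comp_sub_sub_add_mul hf x ζ).continuousAt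
  have h_step₁ := integral_Ioi_rpow_mul_deriv (fun ζ _ => hasDerivAt_sub_comp_sub hf' x ζ)
    (tendsto_rpow_mul_nhdsGT_zero (by push_cast; linarith) hG_zero)
    (tendsto_rpow_mul_atTop (by push_cast; linarith) hG_top)
    (integrableOn_Ioi_rpow_mul hG_cont.continuousOn (by push_cast; linarith)
      (by push_cast; linarith) hG_zero hG_top)
    (integrableOn_Ioi_rpow_mul_comp_sub hp₀ hp₁.le hf''_cont hf''_int hB₂ x)
  have h_step₂ := integral_Ioi_rpow_mul_deriv (p := p - 1)
    (fun ζ _ => hasDerivAt_comp_sub_sub_add_mul hf x ζ)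
    (tendsto_rpow_mul_nhdsGT_zero (by push_cast; linarith) hF_zero)
    (tendsto_rpow_mul_atTop (by push_cast; linarith) hF_top)
    (integrableOn_Ioi_rpow_mul hF_cont.continuousOn (by push_cast; linarith)
      (by push_cast; linarith) hF_zero hF_top)
    (integrableOn_Ioi_rpow_mul hG_cont.continuousOn (by push_cast; linarith)
      (by push_cast; linarith) hG_zero hG_top)
  rw [h_step₁, h_step₂, show p - 1 - 1 = p - 2 by ring]
  ring

theorem stmt_0 (φ : SchwartzMap ℝ ℝ) (x : ℝ) :
    (∫ ζ in Set.Ioi (0:ℝ), ζ ^ (-(1:ℝ)/3) * deriv (deriv ⇑φ) (x - ζ))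
      = (4/9) * ∫ z in Set.Iio (0:ℝ),
          (φ (x + z) - φ x - deriv (⇑φ) x * z) / |z| ^ ((7:ℝ)/3) := by
  have h_bdd (ψ : SchwartzMap ℝ ℝ) (y : ℝ) : |ψ y| ≤ ‖ψ.toBoundedContinuousFunction‖ := by
    simpa using ψ.toBoundedContinuousFunction.norm_coe_le_norm y
  -- `SchwartzMap.derivCLM ℝ ℝ ψ` is definitionally `deriv ψ`.
  set φ' := SchwartzMap.derivCLM ℝ ℝ φ
  set φ'' := SchwartzMap.derivCLM ℝ ℝ φ'
  rw [integral_rpow_mul_comp_sub (f' := deriv φ) (f'' := deriv (deriv φ)) (by norm_num)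
    (by norm_num) φ.hasDerivAt φ'.hasDerivAt φ''.continuous φ''.integrable (h_bdd φ')
    (h_bdd φ'') x, integral_Iio_div_abs_rpow]
  norm_num [← sub_eq_add_neg]
end

section
/- Generalized Gronwall lemma with weak singularity: let g : [0,T] → [0,∞) be bounded measurable, and suppose there are constants A, C ≥ 0 and θ > 0 such that g(t) ≤ A + C ∫₀^t (t−s)^{θ−1} g(s) ds for all t ≤ T. Then sup_{0≤t≤T} g(t) ≤ C_T · A for a constant C_T depending only on C, θ, T (not on A or g). -/
/-!
Weight `g` by `exp (-r t)` (a Bielecki-type norm). Against the weight `exp (r s)` the kernel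
`(t - s) ^ (θ - 1)` integrates to at most `exp (r t) * Γ(θ) / r ^ θ`, so for `r ^ θ > C Γ(θ)` the
Volterra inequality turns any bound `B` of the weighted function on `[0, T]` into the bound
`A + q B` with `q < 1`. Since the weighted function is bounded, its supremum `S` satisfies
`S ≤ A + q S`, i.e. `S ≤ A / (1 - q)`, and then `g ≤ exp (r T) A / (1 - q)`.
-/

open MeasureTheory Set Real

section
variable {θ r t : ℝ}

lemma integrableOn_Ioi_rpow_mul_exp_neg_mul (hθ : 0 < θ) (hr : 0 < r) :
    IntegrableOn (fun u : ℝ => u ^ (θ - 1) * exp (-(r * u))) (Ioi 0) := by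
  simpa [rpow_one, neg_mul] using
    integrableOn_rpow_mul_exp_neg_mul_rpow (p := 1) (s := θ - 1) (b := r) (by linarith) one_pos hr

lemma integral_Ioo_rpow_mul_exp_neg_mul_le (hθ : 0 < θ) (hr : 0 < r) :
    ∫ u in Ioo 0 t, u ^ (θ - 1) * exp (-(r * u)) ≤ Gamma θ / r ^ θ := by
  calc ∫ u in Ioo 0 t, u ^ (θ - 1) * exp (-(r * u))
      ≤ ∫ u in Ioi 0, u ^ (θ - 1) * exp (-(r * u)) := by
        refine setIntegral_mono_set (integrableOn_Ioi_rpow_mul_exp_neg_mul hθ hr) ?_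
          Ioo_subset_Ioi_self.eventuallyLE
        filter_upwards [ae_restrict_mem measurableSet_Ioi] with u hu
        exact mul_nonneg (rpow_nonneg hu.le _) (exp_pos _).le
    _ = Gamma θ / r ^ θ := by
        rw [integral_rpow_mul_exp_neg_mul_Ioi hθ hr, one_div, inv_rpow hr.le]; ring

lemma integral_Ioo_comp_sub_left {f : ℝ → ℝ} (ht : 0 ≤ t) :
    ∫ s in Ioo 0 t, f (t - s) = ∫ u in Ioo 0 t, f u := by
  rw [← integral_Ioc_eq_integral_Ioo, ← integral_Ioc_eq_integral_Ioo,
    ← intervalIntegral.integral_of_le ht, ← intervalIntegral.integral_of_le ht,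
    intervalIntegral.integral_comp_sub_left, sub_self, sub_zero]

lemma integrableOn_Ioo_comp_sub_left {f : ℝ → ℝ} (ht : 0 ≤ t) (hf : IntegrableOn f (Ioc 0 t)) :
    IntegrableOn (fun s => f (t - s)) (Ioo 0 t) := by
  have h := ((intervalIntegrable_iff_integrableOn_Ioc_of_le ht).2 hf).comp_sub_left t
  rw [sub_self, sub_zero] at h
  exact ((intervalIntegrable_iff_integrableOn_Ioc_of_le ht).1 h.symm).mono_set Ioo_subset_Ioc_self

lemma integral_sub_rpow_mul_le_of_le_mul_exp {h : ℝ → ℝ} {B : ℝ} (hθ : 0 < θ) (hr : 0 < r)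
    (ht : 0 ≤ t) (hB : 0 ≤ B) (h0 : ∀ s ∈ Ioo 0 t, 0 ≤ h s)
    (hle : ∀ s ∈ Ioo 0 t, h s ≤ B * exp (r * s)) :
    ∫ s in Ioo 0 t, (t - s) ^ (θ - 1) * h s ≤ B * exp (r * t) * (Gamma θ / r ^ θ) := by
  set k : ℝ → ℝ := fun u => u ^ (θ - 1) * exp (-(r * u))
  have hk : IntegrableOn (fun s => k (t - s)) (Ioo 0 t) :=
    integrableOn_Ioo_comp_sub_left ht
      ((integrableOn_Ioi_rpow_mul_exp_neg_mul hθ hr).mono_set Ioc_subset_Ioi_self)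
  calc ∫ s in Ioo 0 t, (t - s) ^ (θ - 1) * h s
      ≤ ∫ s in Ioo 0 t, B * exp (r * t) * k (t - s) := by
        refine integral_mono_of_nonneg ?_ (hk.const_mul _) ?_ <;>
          filter_upwards [ae_restrict_mem measurableSet_Ioo] with s hs
        · exact mul_nonneg (rpow_nonneg (by linarith [hs.2]) _) (h0 s hs)
        · calc (t - s) ^ (θ - 1) * h s ≤ (t - s) ^ (θ - 1) * (B * exp (r * s)) :=
                mul_le_mul_of_nonneg_left (hle s hs) (rpow_nonneg (by linarith [hs.2]) _)
            _ = B * exp (r * t) * k (t - s) := by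
                simp only [k, mul_sub, exp_sub, exp_neg, inv_div]; field_simp
    _ = B * exp (r * t) * ∫ u in Ioo 0 t, k u := by
        rw [integral_const_mul, integral_Ioo_comp_sub_left (f := k) ht]
    _ ≤ B * exp (r * t) * (Gamma θ / r ^ θ) := by
        gcongr; exact integral_Ioo_rpow_mul_exp_neg_mul_le hθ hr

lemma mem_upperBounds_of_forall_add_mul {s : Set ℝ} (hs : s.Nonempty) (hbdd : BddAbove s)
    {A q : ℝ} (hq : q < 1) (h : ∀ B ∈ upperBounds s, A + q * B ∈ upperBounds s) :
    A / (1 - q) ∈ upperBounds s := by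
  have hsup : sSup s ≤ A + q * sSup s := csSup_le hs (h _ (isLUB_csSup hs hbdd).1)
  intro x hx
  rw [le_div_iff₀ (by linarith)]
  nlinarith [le_csSup hbdd hx]

lemma exp_neg_mul_mul_le_of_le_add_integral {g : ℝ → ℝ} {A C B : ℝ} (hθ : 0 < θ) (hr : 0 < r)
    (ht : 0 ≤ t) (hA : 0 ≤ A) (hC : 0 ≤ C) (hg0 : ∀ s ∈ Icc 0 t, 0 ≤ g s)
    (hB : ∀ s ∈ Icc 0 t, exp (-(r * s)) * g s ≤ B)
    (hgt : g t ≤ A + C * ∫ s in Ioo 0 t, (t - s) ^ (θ - 1) * g s) :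
    exp (-(r * t)) * g t ≤ A + C * (Gamma θ / r ^ θ) * B := by
  have htt : t ∈ Icc 0 t := right_mem_Icc.2 ht
  have hB0 : 0 ≤ B := (mul_nonneg (exp_pos _).le (hg0 t htt)).trans (hB t htt)
  have hconv := integral_sub_rpow_mul_le_of_le_mul_exp hθ hr ht hB0
    (fun s hs => hg0 s (Ioo_subset_Icc_self hs)) fun s hs => by
      have := hB s (Ioo_subset_Icc_self hs)
      rwa [exp_neg, inv_mul_le_iff₀ (exp_pos _), mul_comm] at this
  have hexp : exp (-(r * t)) ≤ 1 := exp_le_one_iff.2 (by nlinarith)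
  calc exp (-(r * t)) * g t
      ≤ exp (-(r * t)) * (A + C * (B * exp (r * t) * (Gamma θ / r ^ θ))) := by
        gcongr
        exact hgt.trans (by gcongr)
    _ = exp (-(r * t)) * A + C * (Gamma θ / r ^ θ) * B := by
        rw [exp_neg]; field_simp
    _ ≤ A + C * (Gamma θ / r ^ θ) * B := by
        gcongr; exact mul_le_of_le_one_left hA hexp
end

theorem stmt_13_general (T C θ : ℝ) (hC : 0 ≤ C) (hθ : 0 < θ) :
    ∃ CT : ℝ, ∀ (g : ℝ → ℝ) (A : ℝ), 0 ≤ A → Measurable g →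
      (∀ t ∈ Set.Icc (0:ℝ) T, 0 ≤ g t) →
      (∃ M : ℝ, ∀ t ∈ Set.Icc (0:ℝ) T, g t ≤ M) →
      (∀ t ∈ Set.Icc (0:ℝ) T,
        g t ≤ A + C * ∫ s in Set.Ioo (0:ℝ) t, (t - s) ^ (θ - 1) * g s) →
      ∀ t ∈ Set.Icc (0:ℝ) T, g t ≤ CT * A := by
  set r := (C * Gamma θ + 1) ^ θ⁻¹
  have hr : 0 < r := by positivity
  have hrθ : r ^ θ = C * Gamma θ + 1 := rpow_inv_rpow (by positivity) hθ.ne'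
  have hq : C * (Gamma θ / r ^ θ) < 1 := by
    rw [hrθ, ← mul_div_assoc, div_lt_one (by positivity)]
    linarith
  set q := C * (Gamma θ / r ^ θ)
  refine ⟨exp (r * T) / (1 - q), ?_⟩
  rintro g A hA - hg0 ⟨M, hM⟩ hineq t ht
  set w : ℝ → ℝ := fun s => exp (-(r * s)) * g s
  have hbdd : BddAbove (w '' Icc 0 T) := ⟨M, by
    rintro _ ⟨s, hs, rfl⟩
    exact (mul_le_of_le_one_left (hg0 s hs) (exp_le_one_iff.2 (by nlinarith [hs.1]))).trans
      (hM s hs)⟩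
  have hw : A / (1 - q) ∈ upperBounds (w '' Icc 0 T) :=
    mem_upperBounds_of_forall_add_mul ⟨_, mem_image_of_mem w ht⟩ hbdd hq fun B hB => by
      rintro _ ⟨s, hs, rfl⟩
      have hsub : Icc 0 s ⊆ Icc 0 T := Icc_subset_Icc_right hs.2
      exact exp_neg_mul_mul_le_of_le_add_integral hθ hr hs.1 hA hC (fun u hu => hg0 u (hsub hu))
        (fun u hu => hB (mem_image_of_mem w (hsub hu))) (hineq s hs)
  calc g t = exp (r * t) * w t := by
        simp only [w, ← mul_assoc, ← exp_add, add_neg_cancel, exp_zero, one_mul]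
    _ ≤ exp (r * t) * (A / (1 - q)) := by gcongr; exact hw (mem_image_of_mem w ht)
    _ ≤ exp (r * T) / (1 - q) * A := by
        rw [div_mul_eq_mul_div, mul_div_assoc]
        have : 0 ≤ A / (1 - q) := div_nonneg hA (by linarith)
        gcongr; exact ht.2

theorem stmt_13 (T C θ : ℝ) (hT : 0 < T) (hC : 0 ≤ C) (hθ : 0 < θ) :
    ∃ CT : ℝ, ∀ (g : ℝ → ℝ) (A : ℝ), 0 ≤ A → Measurable g →
      (∀ t ∈ Set.Icc (0:ℝ) T, 0 ≤ g t) →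
      (∃ M : ℝ, ∀ t ∈ Set.Icc (0:ℝ) T, g t ≤ M) →
      (∀ t ∈ Set.Icc (0:ℝ) T,
        g t ≤ A + C * ∫ s in Set.Ioo (0:ℝ) t, (t - s) ^ (θ - 1) * g s) →
      ∀ t ∈ Set.Icc (0:ℝ) T, g t ≤ CT * A :=
  stmt_13_general T C θ hC hθ
end

section
/- Let u₀ ∈ C²(ℝ) ∩ H²(ℝ) be nonnegative with u₀(x*) = u₀'(x*) = u₀''(x*) = 0 at some point x*, and suppose ∫_{-∞}^0 u₀(x*+z)/|z|^{7/3} dz > 0. If u is a C^{1,2} function on [0,T] × ℝ satisfying ∂ₜu + u∂ₓu + (4/9)∫_{-∞}^0 (u(t,x+z) − u(t,x) − ∂ₓu(t,x)z)/|z|^{7/3}dz − ∂ₓₓu = 0 with u(0,·) = u₀, then ∂ₜu(0, x*) < 0, and hence there exists t* > 0 with u(t*, x*) < 0. -/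
open MeasureTheory Set

theorem HasDerivAt.exists_gt_lt_of_neg {f : ℝ → ℝ} {f' x : ℝ} (hf : HasDerivAt f f' x)
    (hf' : f' < 0) : ∃ z, x < z ∧ f z < f x := by
  obtain ⟨z, hslope, hxz⟩ :=
    (((hf.hasDerivWithinAt (s := Ioi x)).limsup_slope_le' (lt_irrefl x) hf').and
      self_mem_nhdsWithin).exists
  rw [slope_def_field, div_lt_iff₀ (sub_pos.2 hxz), zero_mul] at hslope
  exact ⟨z, hxz, sub_neg.1 hslope⟩

theorem timeDeriv_eq_neg_nonlocal_of_eq_zero {v : ℝ → ℝ} {x vt v' v'' : ℝ}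
    (hpde : vt + v x * v'
      + (4/9) * (∫ z in Iio (0:ℝ), (v (x + z) - v x - v' * z) / |z| ^ ((7:ℝ)/3)) - v'' = 0)
    (hv : v x = 0) (hv' : v' = 0) (hv'' : v'' = 0) :
    vt = -(4/9) * ∫ z in Iio (0:ℝ), v (x + z) / |z| ^ ((7:ℝ)/3) := by
  subst hv' hv''
  simp only [hv, sub_zero, zero_mul, add_zero] at hpde
  linarith

theorem stmt_18_general (T : ℝ) (hT : 0 < T) (u₀ : ℝ → ℝ) (x₀ : ℝ)
    (h0 : u₀ x₀ = 0) (h1 : deriv u₀ x₀ = 0) (h2 : deriv (deriv u₀) x₀ = 0)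
    (hint : 0 < ∫ z in Set.Iio (0:ℝ), u₀ (x₀ + z) / |z| ^ ((7:ℝ)/3))
    (u ut ux uxx : ℝ → ℝ → ℝ)
    (hut : ∀ t ∈ Set.Icc (0:ℝ) T, ∀ x : ℝ, HasDerivAt (fun s => u s x) (ut t x) t)
    (hux : ∀ t ∈ Set.Icc (0:ℝ) T, ∀ x : ℝ, HasDerivAt (fun y => u t y) (ux t x) x)
    (huxx : ∀ t ∈ Set.Icc (0:ℝ) T, ∀ x : ℝ, HasDerivAt (fun y => ux t y) (uxx t x) x)
    (hPDE : ∀ t ∈ Set.Icc (0:ℝ) T, ∀ x : ℝ,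
      ut t x + u t x * ux t x
        + (4/9) * (∫ z in Set.Iio (0:ℝ),
            (u t (x + z) - u t x - ux t x * z) / |z| ^ ((7:ℝ)/3))
        - uxx t x = 0)
    (hinit : ∀ x : ℝ, u 0 x = u₀ x) :
    ut 0 x₀ < 0 ∧ ∃ t₁ : ℝ, 0 < t₁ ∧ u t₁ x₀ < 0 := by
  have h0T : (0:ℝ) ∈ Icc 0 T := ⟨le_rfl, hT.le⟩
  have hu0 : u 0 x₀ = 0 := (hinit x₀).trans h0
  have hux0 : ux 0 = deriv u₀ :=
    funext fun x => by simpa only [hinit] using (hux 0 h0T x).deriv.symm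
  have huxx0 : uxx 0 x₀ = 0 := by
    simpa only [hux0, h2] using (huxx 0 h0T x₀).deriv.symm
  have hut0 : ut 0 x₀ = -(4/9) * ∫ z in Iio (0:ℝ), u₀ (x₀ + z) / |z| ^ ((7:ℝ)/3) := by
    rw [timeDeriv_eq_neg_nonlocal_of_eq_zero (hPDE 0 h0T x₀) hu0 (by rw [hux0, h1]) huxx0]
    simp only [hinit]
  have hneg : ut 0 x₀ < 0 := by
    rw [hut0]
    exact mul_neg_of_neg_of_pos (by norm_num) hint
  obtain ⟨t₁, ht₁, hlt⟩ := (hut 0 h0T x₀).exists_gt_lt_of_neg hneg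
  exact ⟨hneg, t₁, ht₁, hlt.trans_eq hu0⟩

theorem stmt_18 (T : ℝ) (hT : 0 < T) (u₀ : ℝ → ℝ) (x₀ : ℝ)
    (hu₀C2 : ContDiff ℝ 2 u₀)
    (hu₀L2 : MemLp u₀ 2 (volume : Measure ℝ))
    (hu₀'L2 : MemLp (deriv u₀) 2 (volume : Measure ℝ))
    (hu₀''L2 : MemLp (deriv (deriv u₀)) 2 (volume : Measure ℝ))
    (hpos : ∀ x : ℝ, 0 ≤ u₀ x)
    (h0 : u₀ x₀ = 0) (h1 : deriv u₀ x₀ = 0) (h2 : deriv (deriv u₀) x₀ = 0)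
    (hint : 0 < ∫ z in Set.Iio (0:ℝ), u₀ (x₀ + z) / |z| ^ ((7:ℝ)/3))
    (u ut ux uxx : ℝ → ℝ → ℝ)
    (hut : ∀ t ∈ Set.Icc (0:ℝ) T, ∀ x : ℝ, HasDerivAt (fun s => u s x) (ut t x) t)
    (hux : ∀ t ∈ Set.Icc (0:ℝ) T, ∀ x : ℝ, HasDerivAt (fun y => u t y) (ux t x) x)
    (huxx : ∀ t ∈ Set.Icc (0:ℝ) T, ∀ x : ℝ, HasDerivAt (fun y => ux t y) (uxx t x) x)
    (hPDE : ∀ t ∈ Set.Icc (0:ℝ) T, ∀ x : ℝ,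
      ut t x + u t x * ux t x
        + (4/9) * (∫ z in Set.Iio (0:ℝ),
            (u t (x + z) - u t x - ux t x * z) / |z| ^ ((7:ℝ)/3))
        - uxx t x = 0)
    (hinit : ∀ x : ℝ, u 0 x = u₀ x) :
    ut 0 x₀ < 0 ∧ ∃ t₁ : ℝ, 0 < t₁ ∧ u t₁ x₀ < 0 :=
  stmt_18_general T hT u₀ x₀ h0 h1 h2 hint u ut ux uxx hut hux huxx hPDE hinit
end
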